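/- Let (T;t,σ) satisfy observability conditions (O1)-(O3) relative to a species tree S. If (v,w) is a transfer edge, then σ(L_{T_E'}(v)) ∩ σ(L_{T_E'}(w)) = ∅ (property Σ2). -/
import Mathlib


/-- A rooted tree on vertex type `V`, encoded by a parent map.
Edges are directed away from the root; the edge into a non-root vertex `v`
is `(par v, v)`. -/
structure RTree (V : Type*) where
  root : V
  par : V → V
  par_root : par root = root
  par_ne : ∀ v, v ≠ root → par v ≠ v
  reaches : ∀ v, ∃ k, par^[k] v = root

namespace RTree

variable {V : Type*}

/-- `anc T x y` : `x` is a descendant of `y`, i.e. `x ⪯_T y`. -/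
def anc (T : RTree V) (x y : V) : Prop := ∃ k, (T.par)^[k] x = y

/-- strict descendant: `x ≺_T y`. -/
def sanc (T : RTree V) (x y : V) : Prop := T.anc x y ∧ x ≠ y

def IsLeaf (T : RTree V) (v : V) : Prop := ∀ u, T.par u = v → u = v

/-- `x` is a least common ancestor of the set `A`. -/
def IsLca (T : RTree V) (A : Set V) (x : V) : Prop :=
  (∀ a ∈ A, T.anc a x) ∧ ∀ y, (∀ a ∈ A, T.anc a y) → T.anc x y

/-- A time map: strict descendants have strictly larger time stamps. -/
def IsTimeMap (T : RTree V) (τ : V → ℝ) : Prop :=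
  ∀ x y, T.sanc x y → τ y < τ x

end RTree

/-- Event labels: speciation `•`, duplication `□`, HGT `△`, leaf `⊙`. -/
inductive Event where
  | spec | dup | hgt | leaf
deriving DecidableEq

/-- The common setup: a gene tree `T` (vertices `V`) with event labels `t`,
transfer edges `trans` (an edge is recorded by its child endpoint),
a species tree `S` (vertices `W`), the map `sig = σ` assigning to each gene
(leaf of `T`) the species (leaf of `S`) it resides in, and a least common
ancestor function `lca` on the species tree. -/
structure ReconSetup (V W : Type*) where
  T : RTree V
  S : RTree W
  t : V → Event
  trans : Set V
  sig : V → W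
  lca : Set W → W
  trans_ne_root : ∀ v ∈ trans, v ≠ T.root
  trans_hgt : ∀ v ∈ trans, t (T.par v) = Event.hgt
  leaf_iff : ∀ v, T.IsLeaf v ↔ t v = Event.leaf
  sig_leaf : ∀ v, T.IsLeaf v → S.IsLeaf (sig v)
  lca_spec : ∀ A : Set W, A.Nonempty → S.IsLca A (lca A)

/-- lower endpoint of a vertex-or-edge of the species tree
(an edge `(S.par y, y)` is encoded as `Sum.inr y`; a vertex `x` as `Sum.inl x`). -/
def lowPt {W : Type*} : W ⊕ W → W := Sum.elim id id

namespace ReconSetup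

variable {V W : Type*}

/-- ancestor order of the forest `T_{E̅}` obtained by deleting transfer edges. -/
def fanc (R : ReconSetup V W) (x y : V) : Prop :=
  ∃ k, (R.T.par)^[k] x = y ∧ ∀ i < k, (R.T.par)^[i] x ∉ R.trans

def sfanc (R : ReconSetup V W) (x y : V) : Prop := R.fanc x y ∧ x ≠ y

/-- `σ_{T̅}(u)`: the species of the leaves of `T` below `u` in the forest `T_{E̅}`. -/
def sigmaBar (R : ReconSetup V W) (u : V) : Set W :=
  R.sig '' {l | R.T.IsLeaf l ∧ R.fanc l u}

/-- Ancestor order of `S` extended to vertices and edges: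
`z ⪯ (x,y) ↔ z ⪯ y`, `(x,y) ⪯ z ↔ x ⪯ z`, `(x,y) ⪯ (a,b) ↔ y ⪯ b`. -/
def extLE (R : ReconSetup V W) : W ⊕ W → W ⊕ W → Prop
  | Sum.inl a, Sum.inl b => R.S.anc a b
  | Sum.inl a, Sum.inr y => R.S.anc a y
  | Sum.inr y, Sum.inl b => R.S.anc (R.S.par y) b
  | Sum.inr y, Sum.inr z => R.S.anc y z

def extLT (R : ReconSetup V W) (p q : W ⊕ W) : Prop := R.extLE p q ∧ ¬ R.extLE q p

def incomp (R : ReconSetup V W) (p q : W ⊕ W) : Prop := ¬ R.extLE p q ∧ ¬ R.extLE q p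

def IsDupHGT (R : ReconSetup V W) (u : V) : Prop :=
  R.t u = Event.dup ∨ R.t u = Event.hgt

/-- (M1) leaf constraint. -/
def M1 (R : ReconSetup V W) (μ : V → W ⊕ W) : Prop :=
  ∀ u, R.T.IsLeaf u → μ u = Sum.inl (R.sig u)

/-- (M2i) speciation vertices map to the lca of the species below them. -/
def M2i (R : ReconSetup V W) (μ : V → W ⊕ W) : Prop :=
  ∀ u, R.t u = Event.spec → μ u = Sum.inl (R.lca (R.sigmaBar u))

/-- (M2ii) duplication/HGT vertices map to edges of `S`. -/
def M2ii (R : ReconSetup V W) (μ : V → W ⊕ W) : Prop :=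
  ∀ u, R.IsDupHGT u → ∃ y, y ≠ R.S.root ∧ μ u = Sum.inr y

/-- (M2iii) the endpoints of a transfer edge receive incomparable images. -/
def M2iii (R : ReconSetup V W) (μ : V → W ⊕ W) : Prop :=
  ∀ v ∈ R.trans, R.incomp (μ (R.T.par v)) (μ v)

/-- (M3) ancestor constraint within components of `T_{E̅}`. -/
def M3 (R : ReconSetup V W) (μ : V → W ⊕ W) : Prop :=
  ∀ v w, R.sfanc v w →
    ((R.IsDupHGT v ∧ R.IsDupHGT w) → R.extLE (μ v) (μ w)) ∧
    (¬ (R.IsDupHGT v ∧ R.IsDupHGT w) → R.extLT (μ v) (μ w))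

/-- `μ` is a reconciliation map from `(T;t,σ)` to `S`. -/
def IsRecon (R : ReconSetup V W) (μ : V → W ⊕ W) : Prop :=
  R.M1 μ ∧ R.M2i μ ∧ R.M2ii μ ∧ R.M2iii μ ∧ R.M3 μ

/-- (O1) every internal vertex has at least two children. -/
def O1 (R : ReconSetup V W) : Prop :=
  ∀ v, ¬ R.T.IsLeaf v →
    ∃ a b, a ≠ b ∧ R.T.par a = v ∧ R.T.par b = v ∧ a ≠ v ∧ b ≠ v

/-- (O2) every HGT vertex has a transfer child edge and a non-transfer child edge. -/
def O2 (R : ReconSetup V W) : Prop :=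
  ∀ v, R.t v = Event.hgt →
    (∃ c, R.T.par c = v ∧ c ∈ R.trans) ∧ (∃ c, R.T.par c = v ∧ c ≠ v ∧ c ∉ R.trans)

/-- (Σ1) a speciation vertex has two children whose species sets are disjoint. -/
def Sigma1 (R : ReconSetup V W) : Prop :=
  ∀ x, R.t x = Event.spec →
    ∃ v w, v ≠ w ∧ R.T.par v = x ∧ R.T.par w = x ∧ v ≠ x ∧ w ≠ x ∧
      R.sigmaBar v ∩ R.sigmaBar w = ∅

/-- (Σ2) the species sets across a transfer edge are disjoint. -/
def Sigma2 (R : ReconSetup V W) : Prop :=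
  ∀ w ∈ R.trans, R.sigmaBar (R.T.par w) ∩ R.sigmaBar w = ∅

/-- the gene tree is binary. -/
def BinaryT (R : ReconSetup V W) : Prop :=
  ∀ v, ¬ R.T.IsLeaf v →
    ∃ a b, a ≠ b ∧ ∀ c, (R.T.par c = v ∧ c ≠ v) ↔ (c = a ∨ c = b)

/-- the species tree is binary. -/
def BinaryS (R : ReconSetup V W) : Prop :=
  ∀ v, ¬ R.S.IsLeaf v →
    ∃ a b, a ≠ b ∧ ∀ c, (R.S.par c = v ∧ c ≠ v) ↔ (c = a ∨ c = b)

/-- (C1) speciation vertices and leaves get the same time as their image. -/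
def C1 (R : ReconSetup V W) (μ : V → W ⊕ W) (τT : V → ℝ) (τS : W → ℝ) : Prop :=
  ∀ u x, (R.t u = Event.spec ∨ R.t u = Event.leaf) → μ u = Sum.inl x → τT u = τS x

/-- (C2) a vertex mapped into an edge `(x,y)` gets a time strictly between
the times of `x` and `y`. -/
def C2 (R : ReconSetup V W) (μ : V → W ⊕ W) (τT : V → ℝ) (τS : W → ℝ) : Prop :=
  ∀ u y, R.IsDupHGT u → μ u = Sum.inr y → τS (R.S.par y) < τT u ∧ τT u < τS y

/-- `μ` is a time-consistent reconciliation map. -/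
def TimeConsistent (R : ReconSetup V W) (μ : V → W ⊕ W) : Prop :=
  ∃ τT τS, R.T.IsTimeMap τT ∧ R.S.IsTimeMap τS ∧ R.C1 μ τT τS ∧ R.C2 μ τT τS

/-- (D1). -/
def D1 (R : ReconSetup V W) (μ : V → W ⊕ W) (τT : V → ℝ) (τS : W → ℝ) : Prop :=
  ∀ u x, μ u = Sum.inl x → τT u = τS x

/-- (D2). -/
def D2 (R : ReconSetup V W) (τT : V → ℝ) (τS : W → ℝ) : Prop :=
  ∀ u x, R.IsDupHGT u → R.S.anc x (R.lca (R.sigmaBar u)) → τT u < τS x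

/-- (D3), for a transfer edge `(T.par v, v)` with `v ∈ trans`. -/
def D3 (R : ReconSetup V W) (τT : V → ℝ) (τS : W → ℝ) : Prop :=
  ∀ v x, v ∈ R.trans →
    R.S.anc (R.lca (R.sigmaBar (R.T.par v) ∪ R.sigmaBar v)) x → τS x < τT (R.T.par v)

/-- The DTL-scenario axioms (I)-(IV) for a map `γ : V(T) → V(S)`. -/
def DTL (R : ReconSetup V W) (γ : V → W) : Prop :=
  (∀ u, R.T.IsLeaf u → γ u = R.sig u) ∧
  (∀ u v w, v ≠ w → R.T.par v = u → R.T.par w = u → v ≠ u → w ≠ u →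
    ((¬ R.S.sanc (γ u) (γ v) ∧ ¬ R.S.sanc (γ u) (γ w)) ∧
     (R.S.anc (γ v) (γ u) ∨ R.S.anc (γ w) (γ u)))) ∧
  (∀ v, v ≠ R.T.root →
    (v ∈ R.trans ↔ (¬ R.S.anc (γ (R.T.par v)) (γ v) ∧ ¬ R.S.anc (γ v) (γ (R.T.par v))))) ∧
  (∀ u v w, v ≠ w → R.T.par v = u → R.T.par w = u → v ≠ u → w ≠ u →
    ((R.t u = Event.hgt ↔ (v ∈ R.trans ∨ w ∈ R.trans)) ∧
     (R.t u = Event.spec →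
       γ u = R.lca {γ v, γ w} ∧ ¬ R.S.anc (γ v) (γ w) ∧ ¬ R.S.anc (γ w) (γ v)) ∧
     (R.t u = Event.dup → R.S.anc (R.lca {γ v, γ w}) (γ u))))

end ReconSetup

/-- A directed graph (relation) is acyclic: no edge closes a directed cycle. -/
def Acyclic {α : Type*} (r : α → α → Prop) : Prop :=
  ∀ x y, r x y → ¬ Relation.ReflTransGen r y x

lemma RTree.anc_trans {V : Type*} (T : RTree V) {a b c : V}
    (h1 : T.anc a b) (h2 : T.anc b c) : T.anc a c := by
  obtain ⟨k, hk⟩ := h1; obtain ⟨j, hj⟩ := h2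
  exact ⟨j + k, by rw [Function.iterate_add_apply, hk, hj]⟩

lemma RTree.anc_total {V : Type*} (T : RTree V) {x a b : V}
    (h1 : T.anc x a) (h2 : T.anc x b) : T.anc a b ∨ T.anc b a := by
  obtain ⟨k, hk⟩ := h1; obtain ⟨j, hj⟩ := h2
  rcases le_total k j with h | h
  · left; exact ⟨j - k, by rw [← hk, ← Function.iterate_add_apply, Nat.sub_add_cancel h, hj]⟩
  · right; exact ⟨k - j, by rw [← hj, ← Function.iterate_add_apply, Nat.sub_add_cancel h, hk]⟩

lemma fanc_anc_r {V W : Type*} (R : ReconSetup V W) (r : V → W)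
    (hvert : ∀ v, v ≠ R.T.root → v ∉ R.trans → R.S.anc (r v) (r (R.T.par v)))
    {l u : V} (h : R.fanc l u) : R.S.anc (r l) (r u) := by
  obtain ⟨k, hk, hnt⟩ := h
  subst hk
  induction k with
  | zero => exact ⟨0, rfl⟩
  | succ n ih =>
    have h1 : R.S.anc (r l) (r (R.T.par^[n] l)) :=
      ih fun i hi => hnt i (Nat.lt_succ_of_lt hi)
    rw [Function.iterate_succ_apply']
    by_cases hr : R.T.par^[n] l = R.T.root
    · rwa [hr, R.T.par_root, ← hr]
    · exact R.S.anc_trans h1 (hvert _ hr (hnt n (Nat.lt_succ_self n)))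

/-- Σ2: under the observability conditions (O1)-(O3) — with
`r` the species in which each gene-tree vertex resides, vertical transmission
along non-transfer edges, (O3a) for speciation vertices and (O3b) for transfer
edges — for every transfer edge `(T.par w, w)` one has
`σ(L_{T_{E̅}}(T.par w)) ∩ σ(L_{T_{E̅}}(w)) = ∅`. -/
theorem stmt17 {V W : Type*} [Fintype V] (R : ReconSetup V W) (r : V → W)
    (hres : ∀ l, R.T.IsLeaf l → r l = R.sig l)
    (hvert : ∀ v, v ≠ R.T.root → v ∉ R.trans → R.S.anc (r v) (r (R.T.par v)))
    (hO1 : R.O1) (hO2 : R.O2)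
    (hO3a : ∀ x, R.t x = Event.spec →
      ∃ v w, v ≠ w ∧ R.T.par v = x ∧ R.T.par w = x ∧ v ≠ x ∧ w ≠ x ∧
        ¬ R.S.anc (r v) (r w) ∧ ¬ R.S.anc (r w) (r v))
    (hO3b : ∀ w ∈ R.trans,
      ¬ R.S.anc (r (R.T.par w)) (r w) ∧ ¬ R.S.anc (r w) (r (R.T.par w))) :
    ∀ w ∈ R.trans, R.sigmaBar (R.T.par w) ∩ R.sigmaBar w = ∅ := by
  intro w hw
  ext x
  simp only [Set.mem_inter_iff, Set.mem_empty_iff_false, iff_false, not_and]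
  rintro ⟨l1, ⟨hl1, hf1⟩, rfl⟩ ⟨l2, ⟨hl2, hf2⟩, hx2⟩
  have ha1 : R.S.anc (R.sig l1) (r (R.T.par w)) := by
    rw [← hres l1 hl1]; exact fanc_anc_r R r hvert hf1
  have ha2 : R.S.anc (R.sig l1) (r w) := by
    rw [← hx2, ← hres l2 hl2]; exact fanc_anc_r R r hvert hf2
  rcases R.S.anc_total ha1 ha2 with h | h
  · exact (hO3b w hw).1 h
  · exact (hO3b w hw).2 h
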